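/- The Hemlock algorithm is lockout-free: in every execution of the Hemlock transition-system model, every thread that starts executing the entry code for a lock L eventually completes the exit code for L. -/

import Mathlib

namespace Hemlock

/-- Program counter locations of a thread in the Hemlock algorithm. -/
inductive PC where
  | remainder  -- in the remainder section
  | entrySpin  -- in the entry code, spinning on the predecessor's Grant field
  | crit       -- in the critical section
  | exitCAS    -- in the exit code, about to perform the CAS on Tail
  | exitDoor   -- in the exit code, about to perform the exit doorstep (write Grant self := some L)
  | exitSpin   -- in the exit code, spinning on its own Grant field
deriving DecidableEq

/-- A global state of the Hemlock transition system. -/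
structure St (Thread Lock : Type) where
  Tail : Lock → Option Thread        -- the Tail field of each lock
  Grant : Thread → Option Lock       -- the Grant field of each thread
  pc : Thread → PC                   -- program counter of each thread
  lk : Thread → Option Lock          -- the lock currently being acquired/released by each thread
  pred : Thread → Option Thread      -- value returned by each thread's last SWAP

variable {Thread Lock : Type} [DecidableEq Thread] [DecidableEq Lock]

/-- The initial state: all Tail and Grant fields are none, all threads in the remainder. -/
def initSt : St Thread Lock :=
  ⟨fun _ => none, fun _ => none, fun _ => .remainder, fun _ => none, fun _ => none⟩

/-- One atomic transition of thread `t`. -/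
inductive Step (t : Thread) : St Thread Lock → St Thread Lock → Prop where
  /-- a step inside the remainder section -/
  | remainderStay (s : St Thread Lock) (h : s.pc t = .remainder) :
      Step t s s
  /-- the entry doorstep for lock `L`: atomic SWAP on `Tail L`, storing the old value in `pred`;
      if the SWAP returned `none` the thread enters the critical section, else it spins -/
  | doorstep (s : St Thread Lock) (L : Lock) (h : s.pc t = .remainder) :
      Step t s ⟨Function.update s.Tail L (some t), s.Grant,
        Function.update s.pc t (if s.Tail L = none then .crit else .entrySpin),
        Function.update s.lk t (some L),
        Function.update s.pred t (s.Tail L)⟩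
  /-- entry-code busy-wait loop: read `Grant p`; it is not yet `some L`, keep spinning -/
  | spinWait (s : St Thread Lock) (p : Thread) (L : Lock)
      (h : s.pc t = .entrySpin) (hp : s.pred t = some p) (hl : s.lk t = some L)
      (hg : s.Grant p ≠ some L) :
      Step t s s
  /-- entry-code busy-wait loop: read `Grant p = some L`; write `Grant p := none`
      and enter the critical section -/
  | spinAcquire (s : St Thread Lock) (p : Thread) (L : Lock)
      (h : s.pc t = .entrySpin) (hp : s.pred t = some p) (hl : s.lk t = some L)
      (hg : s.Grant p = some L) :
      Step t s ⟨s.Tail, Function.update s.Grant p none,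
        Function.update s.pc t .crit, s.lk, s.pred⟩
  /-- a step inside the critical section -/
  | critStay (s : St Thread Lock) (h : s.pc t = .crit) :
      Step t s s
  /-- leave the critical section and begin the exit code -/
  | exitStart (s : St Thread Lock) (h : s.pc t = .crit) :
      Step t s ⟨s.Tail, s.Grant, Function.update s.pc t .exitCAS, s.lk, s.pred⟩
  /-- successful CAS: `Tail L = some self`, so set `Tail L := none` and
      complete the exit code, returning to the remainder section -/
  | casSucc (s : St Thread Lock) (L : Lock)
      (h : s.pc t = .exitCAS) (hl : s.lk t = some L) (ht : s.Tail L = some t) :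
      Step t s ⟨Function.update s.Tail L none, s.Grant,
        Function.update s.pc t .remainder, Function.update s.lk t none, s.pred⟩
  /-- failed CAS: `Tail L ≠ some self`; proceed to the exit doorstep -/
  | casFail (s : St Thread Lock) (L : Lock)
      (h : s.pc t = .exitCAS) (hl : s.lk t = some L) (ht : s.Tail L ≠ some t) :
      Step t s ⟨s.Tail, s.Grant, Function.update s.pc t .exitDoor, s.lk, s.pred⟩
  /-- the exit doorstep: write `Grant self := some L` and start spinning on `Grant self` -/
  | exitDoorstep (s : St Thread Lock) (L : Lock)
      (h : s.pc t = .exitDoor) (hl : s.lk t = some L) :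
      Step t s ⟨s.Tail, Function.update s.Grant t (some L),
        Function.update s.pc t .exitSpin, s.lk, s.pred⟩
  /-- exit-code busy-wait loop: read `Grant self`; it is not yet `none`, keep spinning -/
  | exitSpinWait (s : St Thread Lock) (h : s.pc t = .exitSpin) (hg : s.Grant t ≠ none) :
      Step t s s
  /-- exit-code busy-wait loop: read `Grant self = none`; complete the exit code,
      returning to the remainder section -/
  | exitDone (s : St Thread Lock) (h : s.pc t = .exitSpin) (hg : s.Grant t = none) :
      Step t s ⟨s.Tail, s.Grant, Function.update s.pc t .remainder,
        Function.update s.lk t none, s.pred⟩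

/-- An execution of the Hemlock transition system: an infinite sequence of states starting
    from the initial state, where each step is one transition of the scheduled thread;
    every thread whose program counter is in the entry, exit or critical section eventually
    takes another step, and every thread leaves each critical section after finitely
    many steps. -/
structure Execution (Thread Lock : Type) [DecidableEq Thread] [DecidableEq Lock]
    [Fintype Thread] where
  states : ℕ → St Thread Lock
  sched : ℕ → Thread
  init : states 0 = initSt
  steps : ∀ n, Step (sched n) (states n) (states (n + 1))
  fair : ∀ n t, (states n).pc t ≠ PC.remainder → ∃ m, n ≤ m ∧ sched m = t
  critFinite : ∀ n t, (states n).pc t = PC.crit → ∃ m, n ≤ m ∧ (states m).pc t ≠ PC.crit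

variable [Fintype Thread]

/-- Thread `t` executes the entry doorstep (the SWAP) for lock `L` at time `n`. -/
def doorstepAt (E : Execution Thread Lock) (n : ℕ) (t : Thread) (L : Lock) : Prop :=
  E.sched n = t ∧ (E.states n).pc t = PC.remainder ∧
    (E.states (n + 1)).pc t ≠ PC.remainder ∧ (E.states (n + 1)).lk t = some L

/-- Thread `t` performs the CAS step of the exit code for lock `L` at time `n`
    (successful or not). -/
def casAt (E : Execution Thread Lock) (n : ℕ) (t : Thread) (L : Lock) : Prop :=
  E.sched n = t ∧ (E.states n).pc t = PC.exitCAS ∧ (E.states n).lk t = some L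

/-- Thread `t` performs the exit doorstep (the write `Grant t := some L`) at time `n`. -/
def exitDoorAt (E : Execution Thread Lock) (n : ℕ) (t : Thread) (L : Lock) : Prop :=
  E.sched n = t ∧ (E.states n).pc t = PC.exitDoor ∧ (E.states n).lk t = some L

/-- Thread `t` is in the critical section protected by `L` in state `s`. -/
def inCS (s : St Thread Lock) (t : Thread) (L : Lock) : Prop :=
  s.pc t = PC.crit ∧ s.lk t = some L

/-- Thread `t` is in the entry code for lock `L` in state `s`. -/
def inEntry (s : St Thread Lock) (t : Thread) (L : Lock) : Prop :=
  s.pc t = PC.entrySpin ∧ s.lk t = some L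

/-- Thread `t` enters the critical section protected by `L` at step `m`. -/
def entersCSAt (E : Execution Thread Lock) (m : ℕ) (t : Thread) (L : Lock) : Prop :=
  E.sched m = t ∧ (E.states m).pc t ≠ PC.crit ∧
    (E.states (m + 1)).pc t = PC.crit ∧ (E.states (m + 1)).lk t = some L

/-- Thread `t` completes its critical section protected by `L` at step `k`
    (leaving the critical section and beginning the exit code). -/
def exitsCSAt (E : Execution Thread Lock) (k : ℕ) (t : Thread) (L : Lock) : Prop :=
  E.sched k = t ∧ (E.states k).pc t = PC.crit ∧ (E.states k).lk t = some L ∧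
    (E.states (k + 1)).pc t ≠ PC.crit

/-- Thread `t` completes the exit code for lock `L` at step `k`
    (returning to the remainder section). -/
def completesExitAt (E : Execution Thread Lock) (k : ℕ) (t : Thread) (L : Lock) : Prop :=
  E.sched k = t ∧ (E.states k).lk t = some L ∧
    (E.states k).pc t ≠ PC.remainder ∧ (E.states (k + 1)).pc t = PC.remainder

/-- `m` is the first time at or after `n` at which thread `t` enters the
    critical section protected by `L`. -/
def firstEntryAfter (E : Execution Thread Lock) (n m : ℕ) (t : Thread) (L : Lock) : Prop :=
  n ≤ m ∧ entersCSAt E m t L ∧ ∀ k, n ≤ k → k < m → ¬ entersCSAt E k t L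

/-- At time `n`, thread `T` is spinning in the entry code waiting for `Grant w`
    to become `some L`: its next step reads `Grant w` inside the entry-code
    busy-wait loop with current lock `L` and `pred = some w`. -/
def spinningEntryFor (E : Execution Thread Lock) (n : ℕ) (T w : Thread) (L : Lock) : Prop :=
  (E.states n).pc T = PC.entrySpin ∧ (E.states n).pred T = some w ∧
    (E.states n).lk T = some L

/-- At time `n`, thread `T` is spinning on the word `Grant w`: its next step reads
    `Grant w` inside one of the two busy-wait loops (the entry-code loop with
    `pred = some w`, or the exit-code loop executed by `w` itself). -/
def spinningOn (E : Execution Thread Lock) (n : ℕ) (T w : Thread) : Prop :=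
  ((E.states n).pc T = PC.entrySpin ∧ (E.states n).pred T = some w) ∨
    (T = w ∧ (E.states n).pc T = PC.exitSpin)

/-- Lock `L` is associated with thread `T` at time `n`: `T` has executed the entry
    doorstep for `L` and has not yet completed the exit code for `L`. -/
def associated (E : Execution Thread Lock) (n : ℕ) (T : Thread) (L : Lock) : Prop :=
  ∃ m, m < n ∧ doorstepAt E m T L ∧ ∀ k, m < k → k < n → ¬ completesExitAt E k T L

set_option linter.unusedSectionVars false

/-- Queue invariant. -/
structure QInv (s : St Thread Lock) (q : Lock → List Thread) : Prop where
  lkrem : ∀ T, s.pc T = PC.remainder ↔ s.lk T = none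
  mem : ∀ L T, T ∈ q L ↔ (s.lk T = some L ∧ ¬(s.pc T = PC.exitSpin ∧ s.Grant T = none))
  inj : ∀ (L : Lock) (i j : ℕ) (T : Thread), (q L)[i]? = some T → (q L)[j]? = some T → i = j
  tl : ∀ L, s.Tail L = (q L).getLast?
  chain : ∀ (L : Lock) (i : ℕ) (a b : Thread), (q L)[i]? = some a → (q L)[i+1]? = some b →
      s.pc b = PC.entrySpin ∧ s.pred b = some a
  hd : ∀ L h, (q L)[0]? = some h →
      s.pc h = PC.crit ∨ s.pc h = PC.exitCAS ∨
      (s.pc h = PC.exitDoor ∧ s.Grant h = none ∧ (q L)[1]? ≠ none) ∨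
      (s.pc h = PC.exitSpin ∧ (q L)[1]? ≠ none)
  grant : ∀ T M, s.Grant T = some M → s.pc T = PC.exitSpin ∧ (q M)[0]? = some T

namespace QInv
variable {s : St Thread Lock} {q : Lock → List Thread} (I : QInv s q)

lemma mem_of_get {L : Lock} {i : ℕ} {T : Thread} (h : (q L)[i]? = some T) : T ∈ q L :=
  List.mem_iff_getElem?.2 ⟨i, h⟩

include I

lemma lkOf {L T} (h : T ∈ q L) : s.lk T = some L := ((I.mem L T).1 h).1

lemma pcNotRem {L T} (h : T ∈ q L) : s.pc T ≠ PC.remainder := by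
  intro hr
  have := (I.lkrem T).1 hr
  rw [I.lkOf h] at this; cases this

lemma grantNone {T} (h : s.pc T ≠ PC.exitSpin) : s.Grant T = none := by
  cases hg : s.Grant T with
  | none => rfl
  | some M => exact absurd (I.grant T M hg).1 h

lemma pos0 {L T} (hT : T ∈ q L) (h : s.pc T ≠ PC.entrySpin) : (q L)[0]? = some T := by
  obtain ⟨i, hi⟩ := List.mem_iff_getElem?.1 hT
  cases i with
  | zero => exact hi
  | succ i' =>
    have hlen : i' + 1 < (q L).length := (List.getElem?_eq_some_iff.1 hi).1
    have h' : (q L)[i']? = some ((q L)[i']'(by omega)) := List.getElem?_eq_getElem (by omega)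
    exact absurd (I.chain L i' _ _ h' hi).1 h

lemma second {L p T} (h0 : (q L)[0]? = some p) (hT : T ∈ q L)
    (hpc : s.pc T = PC.entrySpin) (hp : s.pred T = some p) : (q L)[1]? = some T := by
  obtain ⟨i, hi⟩ := List.mem_iff_getElem?.1 hT
  cases i with
  | zero =>
    rcases I.hd L T hi with h | h | h | h <;> simp [hpc] at h
  | succ i' =>
    have hlen : i' + 1 < (q L).length := (List.getElem?_eq_some_iff.1 hi).1
    have h' : (q L)[i']? = some ((q L)[i']'(by omega)) := List.getElem?_eq_getElem (by omega)
    have hc := (I.chain L i' _ _ h' hi).2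
    rw [hp] at hc
    have : (q L)[i']? = some p := by rw [h', ← Option.some_inj.1 hc]
    have := I.inj L i' 0 p this h0
    subst this; exact hi

lemma grantLk {T L} (hg : s.Grant T = some L) : s.lk T = some L :=
  I.lkOf (mem_of_get (I.grant T L hg).2)

lemma single {L T} (h0 : (q L)[0]? = some T) (hlast : (q L).getLast? = some T) :
    q L = [T] := by
  have hl := hlast
  rw [List.getLast?_eq_getElem?] at hl
  have he := I.inj L ((q L).length - 1) 0 T hl h0
  have hpos : 0 < (q L).length := (List.getElem?_eq_some_iff.1 h0).1
  have h1 : (q L).length = 1 := by omega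
  obtain ⟨a, ha⟩ := List.length_eq_one_iff.1 h1
  rw [ha] at h0 ⊢
  simp at h0; rw [h0]

end QInv

/-- initial invariant -/
lemma init_inv : QInv (initSt : St Thread Lock) (fun _ => []) := by
  constructor <;> simp [initSt]

section StepLemmas
variable {u T w : Thread} {L : Lock} {s s' : St Thread Lock}

lemma Step.pers (hst : Step u s s') (h : u ≠ T) :
    s'.pc T = s.pc T ∧ s'.lk T = s.lk T ∧ s'.pred T = s.pred T := by
  have h' : T ≠ u := fun e => h e.symm
  cases hst <;> simp_all [Function.update_of_ne h']

lemma Step.grant_none_pers (hst : Step u s s') (h : u ≠ w) (hg : s.Grant w = none) :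
    s'.Grant w = none := by
  have h' : w ≠ u := fun e => h e.symm
  cases hst with
  | spinAcquire p L' h1 h2 h3 h4 =>
    by_cases hp : w = p
    · subst hp; simp
    · simp [Function.update_of_ne hp, hg]
  | exitDoorstep L' h1 h2 => simp [Function.update_of_ne h', hg]
  | _ => simp [hg]

lemma Step.from_remainder (hst : Step u s s') (hpc : s.pc u = PC.remainder) :
    s'.pc u = PC.remainder ∨ s'.pc u = PC.crit ∨ s'.pc u = PC.entrySpin := by
  cases hst <;> simp_all
  tauto

lemma Step.from_crit (hst : Step u s s') (hpc : s.pc u = PC.crit) :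
    s'.pc u = PC.crit ∨ (s'.pc u = PC.exitCAS ∧ s'.lk u = s.lk u ∧ s'.Grant = s.Grant) := by
  cases hst <;> simp_all

lemma Step.from_exitCAS (hst : Step u s s') (hpc : s.pc u = PC.exitCAS) :
    s'.pc u = PC.remainder ∨ (s'.pc u = PC.exitDoor ∧ s'.lk u = s.lk u ∧ s'.Grant = s.Grant) := by
  cases hst <;> simp_all

lemma Step.from_exitDoor (hst : Step u s s') (hpc : s.pc u = PC.exitDoor)
    (hl : s.lk u = some L) :
    s'.pc u = PC.exitSpin ∧ s'.Grant u = some L ∧ s'.lk u = some L := by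
  cases hst <;> simp_all

lemma Step.from_exitSpin_none (hst : Step u s s') (hpc : s.pc u = PC.exitSpin)
    (hg : s.Grant u = none) : s'.pc u = PC.remainder := by
  cases hst <;> simp_all

lemma Step.from_entry_ready (hst : Step u s s') (hpc : s.pc u = PC.entrySpin)
    (hp : s.pred u = some w) (hl : s.lk u = some L) (hg : s.Grant w = some L)
    (hwu : w ≠ u) :
    s'.Grant w = none ∧ s'.pc w = s.pc w ∧ s'.lk w = s.lk w := by
  cases hst with
  | spinAcquire p L' h1 h2 h3 h4 =>
    rw [hp] at h2; rw [hl] at h3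
    cases h2; cases h3
    simp [Function.update_of_ne hwu]
  | _ => simp_all

lemma Step.lk_pers (hst : Step u s s')
    (h : s.pc w = PC.crit ∨ s.pc w = PC.entrySpin ∨ s.pc w = PC.exitDoor) :
    s'.lk w = s.lk w := by
  by_cases hw : u = w
  · subst hw
    cases hst <;> simp_all
  · exact (hst.pers hw).2.1

end StepLemmas


section StepInv
variable {Thread' Lock' : Type}

lemma concat_getElem? {α : Type*} (l : List α) (x : α) (i : ℕ) :
    (l ++ [x])[i]? = if i < l.length then l[i]? else if i = l.length then some x else none := by
  rcases lt_trichotomy i l.length with h | h | h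
  · rw [List.getElem?_append_left h, if_pos h]
  · subst h; rw [List.getElem?_concat_length, if_neg (lt_irrefl _), if_pos rfl]
  · rw [if_neg (by omega), if_neg (by omega), List.getElem?_eq_none (by simp; omega)]

end StepInv

namespace QInv
variable {s : St Thread Lock} {q : Lock → List Thread} (I : QInv s q)
include I

lemma not_mem_of_lk {T : Thread} {M : Lock} (h : s.lk T ≠ some M) : T ∉ q M :=
  fun hm => h (I.lkOf hm)

lemma lkSome {T : Thread} (h : s.pc T ≠ PC.remainder) : ∃ M, s.lk T = some M := by
  cases hlk : s.lk T with
  | none => exact absurd ((I.lkrem T).2 hlk) h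
  | some M => exact ⟨M, rfl⟩

end QInv

def QEvol (q q' : Lock → List Thread) : Prop :=
  ∀ L : Lock, q' L = q L ∨ (∃ x, q' L = q L ++ [x]) ∨ q' L = (q L).tail

lemma concat_get_cases {α : Type*} {l : List α} {x a : α} {i : ℕ}
    (h : (l ++ [x])[i]? = some a) :
    (i < l.length ∧ l[i]? = some a) ∨ (i = l.length ∧ a = x) := by
  rw [concat_getElem?] at h
  split at h
  · exact Or.inl ⟨‹_›, h⟩
  · split at h
    · cases h; exact Or.inr ⟨‹_›, rfl⟩
    · cases h

theorem step_inv {u : Thread} {s s' : St Thread Lock} (hst : Step u s s')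
    {q : Lock → List Thread} (I : QInv s q) :
    ∃ q', QInv s' q' ∧ QEvol q q' := by
  cases hst with
  | remainderStay h => exact ⟨q, I, fun L => Or.inl rfl⟩
  | spinWait p L0 h hp hl hg => exact ⟨q, I, fun L => Or.inl rfl⟩
  | critStay h => exact ⟨q, I, fun L => Or.inl rfl⟩
  | exitSpinWait h hg => exact ⟨q, I, fun L => Or.inl rfl⟩
  | doorstep L0 h =>
    have hlkU : s.lk u = none := (I.lkrem u).1 h
    have hnm : ∀ M, u ∉ q M := fun M => I.not_mem_of_lk (by simp [hlkU])
    have hgU : s.Grant u = none := I.grantNone (by simp [h])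
    refine ⟨Function.update q L0 (q L0 ++ [u]), ⟨?_, ?_, ?_, ?_, ?_, ?_, ?_⟩, ?_⟩
    · -- lkrem
      intro T
      by_cases hT : T = u
      · subst hT
        simp only [Function.update_self]
        constructor
        · intro hpc; split at hpc <;> cases hpc
        · intro hlk; cases hlk
      · simp only [Function.update_of_ne hT]
        exact I.lkrem T
    · -- mem
      intro M T
      by_cases hT : T = u
      · subst hT
        by_cases hM : M = L0
        · subst hM
          simp only [Function.update_self]
          constructor
          · intro _
            refine ⟨by simp, ?_⟩
            split <;> simp
          · intro _; simp
        · simp only [Function.update_of_ne hM, Function.update_self]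
          constructor
          · intro hmem; exact absurd hmem (hnm M)
          · rintro ⟨hlk, -⟩
            exact absurd (Option.some_inj.1 hlk).symm hM
      · have hTu : T ≠ u := hT
        have hmem_eq : (T ∈ Function.update q L0 (q L0 ++ [u]) M) ↔ T ∈ q M := by
          by_cases hM : M = L0
          · subst hM; simp [Function.update_self, hTu]
          · simp [Function.update_of_ne hM]
        rw [hmem_eq]
        simp only [Function.update_of_ne hT]
        exact I.mem M T
    · -- inj
      intro M i j T hi hj
      by_cases hM : M = L0
      · subst hM; simp only [Function.update_self] at hi hj
        rcases concat_get_cases hi with ⟨hi1, hi2⟩ | ⟨hi1, hi2⟩ <;>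
          rcases concat_get_cases hj with ⟨hj1, hj2⟩ | ⟨hj1, hj2⟩
        · exact I.inj M i j T hi2 hj2
        · subst hj2; exact absurd (QInv.mem_of_get hi2) (hnm M)
        · subst hi2; exact absurd (QInv.mem_of_get hj2) (hnm M)
        · omega
      · simp only [Function.update_of_ne hM] at hi hj; exact I.inj M i j T hi hj
    · -- tl
      intro M
      by_cases hM : M = L0
      · subst hM; simp only [Function.update_self, List.getLast?_concat]
      · simp only [Function.update_of_ne hM]; exact I.tl M
    · -- chain
      intro M i a b hia hib
      by_cases hM : M = L0
      · subst hM; simp only [Function.update_self] at hia hib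
        rcases concat_get_cases hia with ⟨h1, h2⟩ | ⟨h1, h2⟩
        · rcases concat_get_cases hib with ⟨h3, h4⟩ | ⟨h3, h4⟩
          · have hb : b ≠ u := fun e => hnm M (e ▸ QInv.mem_of_get h4)
            have := I.chain M i a b h2 h4
            simpa only [Function.update_of_ne hb] using this
          · subst h4
            have hlast : s.Tail M = some a := by
              rw [I.tl M, List.getLast?_eq_getElem?,
                show (q M).length - 1 = i by omega]
              exact h2
            constructor
            · simp [hlast]
            · simp [hlast]
        · rcases concat_get_cases hib with ⟨h3, h4⟩ | ⟨h3, h4⟩ <;> omega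
      · simp only [Function.update_of_ne hM] at hia hib
        have hb : b ≠ u := fun e => hnm M (e ▸ QInv.mem_of_get hib)
        have := I.chain M i a b hia hib
        simpa only [Function.update_of_ne hb] using this
    · -- hd
      intro M hh h0
      by_cases hM : M = L0
      · subst hM; simp only [Function.update_self] at h0 ⊢
        rcases concat_get_cases h0 with ⟨h1, h2⟩ | ⟨h1, h2⟩
        · have hne : hh ≠ u := fun e => hnm M (e ▸ QInv.mem_of_get h2)
          have h1' : (q M ++ [u])[1]? ≠ none := by
            intro hnone
            rw [List.getElem?_eq_none_iff, List.length_append,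
              List.length_singleton] at hnone
            omega
          rcases I.hd M hh h2 with hc | hc | hc | hc
          · exact Or.inl (by simpa only [Function.update_of_ne hne] using hc)
          · exact Or.inr (Or.inl (by simpa only [Function.update_of_ne hne] using hc))
          · exact Or.inr (Or.inr (Or.inl
              ⟨by simpa only [Function.update_of_ne hne] using hc.1, hc.2.1, h1'⟩))
          · exact Or.inr (Or.inr (Or.inr
              ⟨by simpa only [Function.update_of_ne hne] using hc.1, h1'⟩))
        · subst h2
          have hTail : s.Tail M = none := by
            rw [I.tl M, List.getLast?_eq_getElem?]
            exact List.getElem?_eq_none (by omega)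
          exact Or.inl (by simp [hTail])
      · simp only [Function.update_of_ne hM] at h0 ⊢
        have hne : hh ≠ u := fun e => hnm M (e ▸ QInv.mem_of_get h0)
        have := I.hd M hh h0
        simpa only [Function.update_of_ne hne] using this
    · -- grant
      intro T M hgT
      have hI := I.grant T M hgT
      have hne : T ≠ u := fun e => by rw [e, hgU] at hgT; cases hgT
      refine ⟨by simpa only [Function.update_of_ne hne] using hI.1, ?_⟩
      by_cases hM : M = L0
      · subst hM; simp only [Function.update_self]
        rw [concat_getElem?, if_pos (List.getElem?_eq_some_iff.1 hI.2).1]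
        exact hI.2
      · simp only [Function.update_of_ne hM]; exact hI.2
    · -- QEvol
      intro M
      by_cases hM : M = L0
      · subst hM; exact Or.inr (Or.inl ⟨u, by simp [Function.update_self]⟩)
      · exact Or.inl (by simp [Function.update_of_ne hM])
  | spinAcquire p L0 h hp hl hg =>
    obtain ⟨hpcp, h0⟩ := I.grant p L0 hg
    have hup : u ≠ p := fun e => by rw [e, hpcp] at h; cases h
    have hpu : p ≠ u := fun e => hup e.symm
    have hlkp : s.lk p = some L0 := I.grantLk hg
    have humem : u ∈ q L0 := (I.mem L0 u).2 ⟨hl, by rw [h]; simp⟩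
    have h1 : (q L0)[1]? = some u := I.second h0 humem h hp
    have hlen2 : 1 < (q L0).length := (List.getElem?_eq_some_iff.1 h1).1
    have htail1 : ∀ (i : ℕ), ((q L0).tail)[i]? = (q L0)[i+1]? :=
      fun i => List.getElem?_tail
    have hpnotmem : ∀ (i : ℕ), ((q L0).tail)[i]? ≠ some p := by
      intro i hi
      rw [htail1] at hi
      have := I.inj L0 (i+1) 0 p hi h0
      omega
    refine ⟨Function.update q L0 ((q L0).tail), ⟨?_, ?_, ?_, ?_, ?_, ?_, ?_⟩, ?_⟩
    · -- lkrem
      intro T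
      by_cases hT : T = u
      · subst hT; simp only [Function.update_self]
        constructor
        · intro e; cases e
        · intro e; rw [hl] at e; cases e
      · simp only [Function.update_of_ne hT]; exact I.lkrem T
    · -- mem
      intro M T
      by_cases hT : T = p
      · subst hT
        constructor
        · intro hmem
          exfalso
          by_cases hM : M = L0
          · subst hM
            simp only [Function.update_self] at hmem
            obtain ⟨i, hi⟩ := List.mem_iff_getElem?.1 hmem
            exact hpnotmem i hi
          · simp only [Function.update_of_ne hM] at hmem
            exact hM (Option.some_inj.1 (hlkp.symm.trans (I.lkOf hmem))).symm
        · rintro ⟨-, hz⟩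
          exact absurd ⟨by simp only [Function.update_of_ne hpu]; exact hpcp, by simp⟩ hz
      · by_cases hTu : T = u
        · subst hTu
          by_cases hM : M = L0
          · subst hM
            simp only [Function.update_self]
            constructor
            · intro _; exact ⟨hl, by simp⟩
            · intro _; exact List.mem_iff_getElem?.2 ⟨0, by rw [htail1]; exact h1⟩
          · simp only [Function.update_of_ne hM]
            constructor
            · intro hmem
              exact absurd (Option.some_inj.1 (hl.symm.trans (I.lkOf hmem))).symm hM
            · rintro ⟨hlk, -⟩
              exact absurd (Option.some_inj.1 (hl.symm.trans hlk)).symm hM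
        · have hpc' : Function.update s.pc u PC.crit T = s.pc T :=
            Function.update_of_ne hTu _ _
          have hg' : Function.update s.Grant p none T = s.Grant T :=
            Function.update_of_ne hT _ _
          by_cases hM : M = L0
          · subst hM
            simp only [Function.update_self]
            constructor
            · intro hmem
              obtain ⟨hlkT, hnz⟩ := (I.mem _ T).1 (List.mem_of_mem_tail hmem)
              refine ⟨hlkT, ?_⟩
              rw [hpc', hg']; exact hnz
            · rintro ⟨hlkT, hnz⟩
              rw [hpc', hg'] at hnz
              obtain ⟨i, hi⟩ := List.mem_iff_getElem?.1 ((I.mem _ T).2 ⟨hlkT, hnz⟩)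
              cases i with
              | zero => exact absurd (Option.some_inj.1 (h0.symm.trans hi)).symm hT
              | succ i' => exact List.mem_iff_getElem?.2 ⟨i', by rw [htail1]; exact hi⟩
          · simp only [Function.update_of_ne hM, hpc', hg']
            exact I.mem M T
    · -- inj
      intro M i j T hi hj
      by_cases hM : M = L0
      · subst hM
        simp only [Function.update_self] at hi hj
        rw [htail1] at hi
        rw [htail1] at hj
        have := I.inj _ (i+1) (j+1) T hi hj
        omega
      · simp only [Function.update_of_ne hM] at hi hj
        exact I.inj M i j T hi hj
    · -- tl
      intro M
      by_cases hM : M = L0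
      · subst hM
        simp only [Function.update_self]
        have hlast : ((q M).tail).getLast? = (q M).getLast? := by
          rw [List.getLast?_eq_getElem?, List.getLast?_eq_getElem?, htail1,
            List.length_tail]
          have hidx : (q M).length - 1 - 1 + 1 = (q M).length - 1 := by omega
          rw [hidx]
        rw [hlast]
        exact I.tl M
      · simp only [Function.update_of_ne hM]; exact I.tl M
    · -- chain
      intro M i a b hia hib
      by_cases hM : M = L0
      · subst hM
        simp only [Function.update_self] at hia hib
        rw [htail1] at hia
        rw [htail1] at hib
        have hc := I.chain _ (i+1) a b hia hib
        have hbne : b ≠ u := by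
          intro e; rw [e] at hib
          have := I.inj _ (i+1+1) 1 u hib h1
          omega
        exact ⟨by simp only [Function.update_of_ne hbne]; exact hc.1, hc.2⟩
      · simp only [Function.update_of_ne hM] at hia hib
        have hc := I.chain M i a b hia hib
        have hbne : b ≠ u := by
          intro e; rw [e] at hib
          exact hM (Option.some_inj.1 (hl.symm.trans (I.lkOf (QInv.mem_of_get hib)))).symm
        exact ⟨by simp only [Function.update_of_ne hbne]; exact hc.1, hc.2⟩
    · -- hd
      intro M hh h0'
      by_cases hM : M = L0
      · subst hM
        simp only [Function.update_self] at h0'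
        rw [htail1] at h0'
        have h0'' : (q M)[1]? = some hh := by simpa using h0'
        cases Option.some_inj.1 (h1.symm.trans h0'')
        exact Or.inl (by simp only [Function.update_self])
      · simp only [Function.update_of_ne hM] at h0' ⊢
        have hhmem := QInv.mem_of_get h0'
        have hne : hh ≠ u := by
          intro e; rw [e] at hhmem
          exact hM (Option.some_inj.1 (hl.symm.trans (I.lkOf hhmem))).symm
        have hnep : hh ≠ p := by
          intro e; rw [e] at hhmem
          exact hM (Option.some_inj.1 (hlkp.symm.trans (I.lkOf hhmem))).symm
        have := I.hd M hh h0'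
        simpa only [Function.update_of_ne hne, Function.update_of_ne hnep] using this
    · -- grant
      intro T M hgT
      have hTp : T ≠ p := by
        intro e; rw [e] at hgT; simp at hgT
      simp only [Function.update_of_ne hTp] at hgT
      obtain ⟨hpcT, hheadT⟩ := I.grant T M hgT
      have hTu : T ≠ u := fun e => by rw [e, h] at hpcT; cases hpcT
      refine ⟨by simp only [Function.update_of_ne hTu]; exact hpcT, ?_⟩
      by_cases hM : M = L0
      · subst hM
        exact absurd (Option.some_inj.1 (hheadT.symm.trans h0)) hTp
      · simp only [Function.update_of_ne hM]; exact hheadT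
    · -- QEvol
      intro M
      by_cases hM : M = L0
      · subst hM; exact Or.inr (Or.inr (Function.update_self _ _ _))
      · exact Or.inl (Function.update_of_ne hM _ _)
  | exitStart h =>
    obtain ⟨L0, hl⟩ := I.lkSome (by rw [h]; simp)
    have humem : u ∈ q L0 := (I.mem L0 u).2 ⟨hl, by rw [h]; simp⟩
    have h0 : (q L0)[0]? = some u := I.pos0 humem (by rw [h]; simp)
    refine ⟨q, ⟨?_, ?_, ?_, ?_, ?_, ?_, ?_⟩, fun L => Or.inl rfl⟩
    · intro T
      by_cases hT : T = u
      · subst hT; simp only [Function.update_self]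
        constructor
        · intro e; cases e
        · intro e; rw [hl] at e; cases e
      · simp only [Function.update_of_ne hT]; exact I.lkrem T
    · intro M T
      by_cases hT : T = u
      · subst hT
        constructor
        · intro hmem; exact ⟨I.lkOf hmem, by simp⟩
        · rintro ⟨hlk, -⟩; exact (I.mem M _).2 ⟨hlk, by rw [h]; simp⟩
      · simp only [Function.update_of_ne hT]; exact I.mem M T
    · exact I.inj
    · exact I.tl
    · intro M i a b hia hib
      have hc := I.chain M i a b hia hib
      have hbne : b ≠ u := by
        intro e; rw [e] at hib
        have hM : M = L0 :=
          Option.some_inj.1 ((I.lkOf (QInv.mem_of_get hib)).symm.trans hl)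
        subst hM
        have := I.inj _ (i+1) 0 u hib h0
        omega
      exact ⟨by simp only [Function.update_of_ne hbne]; exact hc.1, hc.2⟩
    · intro M hh h0'
      by_cases hT : hh = u
      · subst hT
        exact Or.inr (Or.inl (by simp only [Function.update_self]))
      · have := I.hd M hh h0'
        simpa only [Function.update_of_ne hT] using this
    · intro T M hgT
      obtain ⟨hpcT, hh⟩ := I.grant T M hgT
      have hTu : T ≠ u := fun e => by rw [e, h] at hpcT; cases hpcT
      exact ⟨by simp only [Function.update_of_ne hTu]; exact hpcT, hh⟩
  | casSucc L0 h hl ht =>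
    have humem : u ∈ q L0 := (I.mem L0 u).2 ⟨hl, by rw [h]; simp⟩
    have h0 : (q L0)[0]? = some u := I.pos0 humem (by rw [h]; simp)
    have hqL : q L0 = [u] := I.single h0 (by rw [← I.tl]; exact ht)
    have hgU : s.Grant u = none := I.grantNone (by rw [h]; simp)
    refine ⟨Function.update q L0 [], ⟨?_, ?_, ?_, ?_, ?_, ?_, ?_⟩, ?_⟩
    · intro T
      by_cases hT : T = u
      · subst hT; simp
      · simp only [Function.update_of_ne hT, Function.update_of_ne hT]; exact I.lkrem T
    · intro M T
      by_cases hT : T = u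
      · subst hT
        constructor
        · intro hmem
          exfalso
          by_cases hM : M = L0
          · subst hM; simp only [Function.update_self] at hmem; exact List.not_mem_nil hmem
          · simp only [Function.update_of_ne hM] at hmem
            exact hM (Option.some_inj.1 (hl.symm.trans (I.lkOf hmem))).symm
        · rintro ⟨hlk, -⟩
          simp only [Function.update_self] at hlk; cases hlk
      · have hmemiff : T ∈ Function.update q L0 [] M ↔ T ∈ q M := by
          by_cases hM : M = L0
          · subst hM; simp only [Function.update_self]
            constructor
            · intro hx; exact absurd hx List.not_mem_nil
            · intro hx; rw [hqL] at hx; simp at hx; exact absurd hx hT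
          · simp only [Function.update_of_ne hM]
        rw [hmemiff]
        simp only [Function.update_of_ne hT]
        exact I.mem M T
    · intro M i j T hi hj
      by_cases hM : M = L0
      · subst hM; simp only [Function.update_self] at hi; simp at hi
      · simp only [Function.update_of_ne hM] at hi hj; exact I.inj M i j T hi hj
    · intro M
      by_cases hM : M = L0
      · subst hM; simp only [Function.update_self, Function.update_self]; rfl
      · simp only [Function.update_of_ne hM, Function.update_of_ne hM]; exact I.tl M
    · intro M i a b hia hib
      by_cases hM : M = L0
      · subst hM; simp only [Function.update_self] at hia; simp at hia
      · simp only [Function.update_of_ne hM] at hia hib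
        have hc := I.chain M i a b hia hib
        have hbne : b ≠ u := by
          intro e; rw [e] at hib
          exact hM (Option.some_inj.1 (hl.symm.trans (I.lkOf (QInv.mem_of_get hib)))).symm
        exact ⟨by simp only [Function.update_of_ne hbne]; exact hc.1, hc.2⟩
    · intro M hh h0'
      by_cases hM : M = L0
      · subst hM; simp only [Function.update_self] at h0'; simp at h0'
      · simp only [Function.update_of_ne hM] at h0' ⊢
        have hne : hh ≠ u := by
          intro e; rw [e] at h0'
          exact hM (Option.some_inj.1 (hl.symm.trans (I.lkOf (QInv.mem_of_get h0')))).symm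
        have := I.hd M hh h0'
        simpa only [Function.update_of_ne hne] using this
    · intro T M hgT
      obtain ⟨hpcT, hh⟩ := I.grant T M hgT
      have hTu : T ≠ u := fun e => by rw [e, hgU] at hgT; cases hgT
      refine ⟨by simp only [Function.update_of_ne hTu]; exact hpcT, ?_⟩
      by_cases hM : M = L0
      · subst hM
        exfalso
        rw [hqL] at hh
        simp at hh
        exact hTu hh.symm
      · simp only [Function.update_of_ne hM]; exact hh
    · intro M
      by_cases hM : M = L0
      · subst hM
        refine Or.inr (Or.inr ?_)
        simp only [Function.update_self, hqL]
        rfl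
      · exact Or.inl (Function.update_of_ne hM _ _)
  | casFail L0 h hl ht =>
    have humem : u ∈ q L0 := (I.mem L0 u).2 ⟨hl, by rw [h]; simp⟩
    have h0 : (q L0)[0]? = some u := I.pos0 humem (by rw [h]; simp)
    have hgU : s.Grant u = none := I.grantNone (by rw [h]; simp)
    have hrest : (q L0)[1]? ≠ none := by
      intro hnone
      rw [List.getElem?_eq_none_iff] at hnone
      have hpos : 0 < (q L0).length := (List.getElem?_eq_some_iff.1 h0).1
      have hlen : (q L0).length = 1 := by omega
      apply ht
      rw [I.tl, List.getLast?_eq_getElem?, hlen]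
      simpa using h0
    refine ⟨q, ⟨?_, ?_, ?_, ?_, ?_, ?_, ?_⟩, fun L => Or.inl rfl⟩
    · intro T
      by_cases hT : T = u
      · subst hT; simp only [Function.update_self]
        constructor
        · intro e; cases e
        · intro e; rw [hl] at e; cases e
      · simp only [Function.update_of_ne hT]; exact I.lkrem T
    · intro M T
      by_cases hT : T = u
      · subst hT
        constructor
        · intro hmem; exact ⟨I.lkOf hmem, by simp⟩
        · rintro ⟨hlk, -⟩; exact (I.mem M _).2 ⟨hlk, by rw [h]; simp⟩
      · simp only [Function.update_of_ne hT]; exact I.mem M T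
    · exact I.inj
    · exact I.tl
    · intro M i a b hia hib
      have hc := I.chain M i a b hia hib
      have hbne : b ≠ u := by
        intro e; rw [e] at hib
        have hM : M = L0 :=
          Option.some_inj.1 ((I.lkOf (QInv.mem_of_get hib)).symm.trans hl)
        subst hM
        have := I.inj _ (i+1) 0 u hib h0
        omega
      exact ⟨by simp only [Function.update_of_ne hbne]; exact hc.1, hc.2⟩
    · intro M hh h0'
      by_cases hT : hh = u
      · subst hT
        have hM : M = L0 :=
          Option.some_inj.1 ((I.lkOf (QInv.mem_of_get h0')).symm.trans hl)
        subst hM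
        exact Or.inr (Or.inr (Or.inl ⟨by simp only [Function.update_self], hgU, hrest⟩))
      · have := I.hd M hh h0'
        simpa only [Function.update_of_ne hT] using this
    · intro T M hgT
      obtain ⟨hpcT, hh⟩ := I.grant T M hgT
      have hTu : T ≠ u := fun e => by rw [e, h] at hpcT; cases hpcT
      exact ⟨by simp only [Function.update_of_ne hTu]; exact hpcT, hh⟩
  | exitDoorstep L0 h hl =>
    have humem : u ∈ q L0 := (I.mem L0 u).2 ⟨hl, by rw [h]; simp⟩
    have h0 : (q L0)[0]? = some u := I.pos0 humem (by rw [h]; simp)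
    have hrest : (q L0)[1]? ≠ none := by
      rcases I.hd L0 u h0 with hc | hc | hc | hc
      · exact absurd (h.symm.trans hc) (by decide)
      · exact absurd (h.symm.trans hc) (by decide)
      · exact hc.2.2
      · exact absurd (h.symm.trans hc.1) (by decide)
    refine ⟨q, ⟨?_, ?_, ?_, ?_, ?_, ?_, ?_⟩, fun L => Or.inl rfl⟩
    · intro T
      by_cases hT : T = u
      · subst hT; simp only [Function.update_self]
        constructor
        · intro e; cases e
        · intro e; rw [hl] at e; cases e
      · simp only [Function.update_of_ne hT]; exact I.lkrem T
    · intro M T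
      by_cases hT : T = u
      · subst hT
        constructor
        · intro hmem
          refine ⟨I.lkOf hmem, ?_⟩
          simp only [Function.update_self]
          simp
        · rintro ⟨hlk, -⟩
          have hM : M = L0 := Option.some_inj.1 (hlk.symm.trans hl)
          subst hM
          exact humem
      · simp only [Function.update_of_ne hT, Function.update_of_ne hT]; exact I.mem M T
    · exact I.inj
    · exact I.tl
    · intro M i a b hia hib
      have hc := I.chain M i a b hia hib
      have hbne : b ≠ u := by
        intro e; rw [e] at hib
        have hM : M = L0 :=
          Option.some_inj.1 ((I.lkOf (QInv.mem_of_get hib)).symm.trans hl)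
        subst hM
        have := I.inj _ (i+1) 0 u hib h0
        omega
      exact ⟨by simp only [Function.update_of_ne hbne]; exact hc.1, hc.2⟩
    · intro M hh h0'
      by_cases hT : hh = u
      · subst hT
        have hM : M = L0 :=
          Option.some_inj.1 ((I.lkOf (QInv.mem_of_get h0')).symm.trans hl)
        subst hM
        exact Or.inr (Or.inr (Or.inr ⟨by simp only [Function.update_self], hrest⟩))
      · have := I.hd M hh h0'
        simpa only [Function.update_of_ne hT] using this
    · intro T M hgT
      by_cases hTu : T = u
      · subst hTu
        simp only [Function.update_self] at hgT
        cases Option.some_inj.1 hgT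
        exact ⟨by simp only [Function.update_self], h0⟩
      · simp only [Function.update_of_ne hTu] at hgT
        obtain ⟨hpcT, hh⟩ := I.grant T M hgT
        exact ⟨by simp only [Function.update_of_ne hTu]; exact hpcT, hh⟩
  | exitDone h hg =>
    have hnm : ∀ M, u ∉ q M := by
      intro M hm
      exact ((I.mem M u).1 hm).2 ⟨h, hg⟩
    refine ⟨q, ⟨?_, ?_, ?_, ?_, ?_, ?_, ?_⟩, fun L => Or.inl rfl⟩
    · intro T
      by_cases hT : T = u
      · subst hT; simp
      · simp only [Function.update_of_ne hT, Function.update_of_ne hT]; exact I.lkrem T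
    · intro M T
      by_cases hT : T = u
      · subst hT
        constructor
        · intro hmem; exact absurd hmem (hnm M)
        · rintro ⟨hlk, -⟩; simp only [Function.update_self] at hlk; cases hlk
      · simp only [Function.update_of_ne hT, Function.update_of_ne hT]; exact I.mem M T
    · exact I.inj
    · exact I.tl
    · intro M i a b hia hib
      have hc := I.chain M i a b hia hib
      have hbne : b ≠ u := by
        intro e; rw [e] at hib
        exact hnm M (QInv.mem_of_get hib)
      exact ⟨by simp only [Function.update_of_ne hbne]; exact hc.1, hc.2⟩
    · intro M hh h0'
      have hne : hh ≠ u := by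
        intro e; rw [e] at h0'
        exact hnm M (QInv.mem_of_get h0')
      have := I.hd M hh h0'
      simpa only [Function.update_of_ne hne] using this
    · intro T M hgT
      obtain ⟨hpcT, hh⟩ := I.grant T M hgT
      have hTu : T ≠ u := fun e => by rw [e, hg] at hgT; cases hgT
      exact ⟨by simp only [Function.update_of_ne hTu]; exact hpcT, hh⟩

section Live
variable {Thread Lock : Type} [DecidableEq Thread] [DecidableEq Lock] [Fintype Thread]
variable (E : Execution Thread Lock)

lemma Step.grant_change {u w : Thread} {L : Lock} {s s' : St Thread Lock}
    (hst : Step u s s') {q : Lock → List Thread} (I : QInv s q)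
    (hg : s.Grant w = some L) (hu : (q L)[1]? ≠ some u) :
    s'.Grant w = some L := by
  obtain ⟨hpcw, h0⟩ := I.grant w L hg
  cases hst with
  | spinAcquire p L' h hp hl hg' =>
    by_cases hpw : p = w
    · exfalso
      rw [hpw] at hg' hp
      rw [hg] at hg'
      have hL : L' = L := (Option.some_inj.1 hg').symm
      rw [hL] at hl
      have humem : u ∈ q L := (I.mem L u).2 ⟨hl, by rw [h]; simp⟩
      exact hu (I.second h0 humem h hp)
    · show Function.update s.Grant p none w = some L
      rw [Function.update_of_ne (fun e => hpw e.symm)]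
      exact hg
  | exitDoorstep L' h hl =>
    have hwu : w ≠ u := fun e => by rw [e, h] at hpcw; cases hpcw
    show Function.update s.Grant u (some L') w = some L
    rw [Function.update_of_ne hwu]
    exact hg
  | _ => exact hg

noncomputable def QF : (n : ℕ) → {q : Lock → List Thread // QInv (E.states n) q}
  | 0 => ⟨fun _ => [], by rw [E.init]; exact init_inv⟩
  | (n+1) => ⟨(step_inv (E.steps n) (QF n).2).choose,
      (step_inv (E.steps n) (QF n).2).choose_spec.1⟩

noncomputable def Q (n : ℕ) : Lock → List Thread := (QF E n).1

lemma QI (n : ℕ) : QInv (E.states n) (Q E n) := (QF E n).2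

lemma QE (n : ℕ) : QEvol (Q E n) (Q E (n+1)) :=
  (step_inv (E.steps n) (QF E n).2).choose_spec.2

lemma first_sched {n : ℕ} {T : Thread} (hn : (E.states n).pc T ≠ PC.remainder) :
    ∃ m, n ≤ m ∧ E.sched m = T ∧ ∀ k, n ≤ k → k < m → E.sched k ≠ T := by
  classical
  obtain ⟨m0, hm0, hs0⟩ := E.fair n T hn
  have hP : ∃ m, n ≤ m ∧ E.sched m = T := ⟨m0, hm0, hs0⟩
  refine ⟨Nat.find hP, (Nat.find_spec hP).1, (Nat.find_spec hP).2, ?_⟩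
  intro k hk1 hk2 hks
  exact Nat.find_min hP hk2 ⟨hk1, hks⟩

lemma pers_interval {n m : ℕ} {T : Thread} (hnm : n ≤ m)
    (hns : ∀ k, n ≤ k → k < m → E.sched k ≠ T) :
    (E.states m).pc T = (E.states n).pc T ∧ (E.states m).lk T = (E.states n).lk T ∧
      (E.states m).pred T = (E.states n).pred T := by
  induction m, hnm using Nat.le_induction with
  | base => exact ⟨rfl, rfl, rfl⟩
  | succ m hm ih =>
    have ih' := ih (fun k hk1 hk2 => hns k hk1 (by omega))
    have hstep := (E.steps m).pers (hns m hm (by omega))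
    exact ⟨hstep.1.trans ih'.1, hstep.2.1.trans ih'.2.1, hstep.2.2.trans ih'.2.2⟩

lemma grant_none_interval {n m : ℕ} {w : Thread} (hnm : n ≤ m)
    (hg : (E.states n).Grant w = none)
    (hns : ∀ k, n ≤ k → k < m → E.sched k ≠ w) :
    (E.states m).Grant w = none := by
  induction m, hnm using Nat.le_induction with
  | base => exact hg
  | succ m hm ih =>
    exact (E.steps m).grant_none_pers (hns m hm (by omega))
      (ih fun k h1 h2 => hns k h1 (by omega))

lemma zombie_live {n : ℕ} {w : Thread} {L : Lock}
    (hpc : (E.states n).pc w = PC.exitSpin) (hg : (E.states n).Grant w = none)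
    (hl : (E.states n).lk w = some L) :
    ∃ m, n ≤ m ∧ completesExitAt E m w L := by
  obtain ⟨m, hnm, hsm, hmin⟩ := first_sched E (n := n) (T := w) (by rw [hpc]; simp)
  have hpers := pers_interval E hnm hmin
  have hgm := grant_none_interval E hnm hg hmin
  have hstep := E.steps m
  rw [hsm] at hstep
  have hpc1 := hstep.from_exitSpin_none (hpers.1.trans hpc) hgm
  exact ⟨m, hnm, hsm, hpers.2.1.trans hl, by rw [hpers.1.trans hpc]; simp, hpc1⟩

lemma waiting_pers {n m : ℕ} {w T : Thread} {L : Lock} (hnm : n ≤ m)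
    (hg : (E.states n).Grant w = some L)
    (hpcT : (E.states n).pc T = PC.entrySpin) (hpredT : (E.states n).pred T = some w)
    (hlkT : (E.states n).lk T = some L)
    (hns : ∀ k, n ≤ k → k < m → E.sched k ≠ T) :
    (E.states m).Grant w = some L ∧ (E.states m).pc T = PC.entrySpin ∧
      (E.states m).pred T = some w ∧ (E.states m).lk T = some L := by
  induction m, hnm using Nat.le_induction with
  | base => exact ⟨hg, hpcT, hpredT, hlkT⟩
  | succ m hm ih =>
    obtain ⟨ihg, ihpc, ihpred, ihlk⟩ := ih (fun k h1 h2 => hns k h1 (by omega))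
    have hsk : E.sched m ≠ T := hns m hm (by omega)
    have hT2 : (Q E m L)[1]? = some T := by
      have I := QI E m
      have h0 : (Q E m L)[0]? = some w := (I.grant w L ihg).2
      have hTmem : T ∈ Q E m L := (I.mem L T).2 ⟨ihlk, by rw [ihpc]; simp⟩
      exact I.second h0 hTmem ihpc ihpred
    have hgpres := (E.steps m).grant_change (QI E m) ihg
      (by rw [hT2]; intro e; exact hsk (Option.some_inj.1 e).symm)
    have hTpers := (E.steps m).pers hsk
    exact ⟨hgpres, hTpers.1.trans ihpc, hTpers.2.2.trans ihpred, hTpers.2.1.trans ihlk⟩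

lemma grant_live {n : ℕ} {w : Thread} {L : Lock}
    (hg : (E.states n).Grant w = some L) :
    ∃ m, n ≤ m ∧ completesExitAt E m w L := by
  have I := QI E n
  obtain ⟨hpcw, h0⟩ := I.grant w L hg
  have hwmem : w ∈ Q E n L := QInv.mem_of_get h0
  have hlkw : (E.states n).lk w = some L := I.lkOf hwmem
  have hrest : (Q E n L)[1]? ≠ none := by
    rcases I.hd L w h0 with hc | hc | hc | hc
    · exact absurd (hpcw.symm.trans hc) (by decide)
    · exact absurd (hpcw.symm.trans hc) (by decide)
    · exact absurd (hpcw.symm.trans hc.1) (by decide)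
    · exact hc.2
  obtain ⟨T, hT1⟩ : ∃ T, (Q E n L)[1]? = some T := by
    cases hx : (Q E n L)[1]? with
    | none => exact absurd hx hrest
    | some T => exact ⟨T, rfl⟩
  have hchain := I.chain L 0 w T h0 hT1
  have hTlk : (E.states n).lk T = some L := I.lkOf (QInv.mem_of_get hT1)
  obtain ⟨m, hnm, hsm, hmin⟩ :=
    first_sched E (n := n) (T := T) (by rw [hchain.1]; simp)
  obtain ⟨hgm, hpcm, hpredm, hlkm⟩ :=
    waiting_pers E hnm hg hchain.1 hchain.2 hTlk hmin
  have hstep := E.steps m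
  rw [hsm] at hstep
  have hwT : w ≠ T := by
    intro e; rw [e, hchain.1] at hpcw; cases hpcw
  have hres := hstep.from_entry_ready hpcm hpredm hlkm hgm hwT
  have hpcwm : (E.states m).pc w = PC.exitSpin := ((QI E m).grant w L hgm).1
  have hlkwm : (E.states m).lk w = some L := (QI E m).grantLk hgm
  obtain ⟨m2, hm2, hc⟩ := zombie_live E (n := m+1)
    (by rw [hres.2.1]; exact hpcwm) hres.1 (by rw [hres.2.2]; exact hlkwm)
  exact ⟨m2, by omega, hc⟩

lemma door_live {n : ℕ} {w : Thread} {L : Lock}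
    (hpc : (E.states n).pc w = PC.exitDoor) (hl : (E.states n).lk w = some L) :
    ∃ m, n ≤ m ∧ completesExitAt E m w L := by
  obtain ⟨m, hnm, hsm, hmin⟩ := first_sched E (n := n) (T := w) (by rw [hpc]; simp)
  have hpers := pers_interval E hnm hmin
  have hstep := E.steps m
  rw [hsm] at hstep
  have hres := hstep.from_exitDoor (hpers.1.trans hpc) (hpers.2.1.trans hl)
  obtain ⟨m2, hm2, hc⟩ := grant_live E (n := m+1) hres.2.1
  exact ⟨m2, by omega, hc⟩

lemma cas_live {n : ℕ} {w : Thread} {L : Lock}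
    (hpc : (E.states n).pc w = PC.exitCAS) (hl : (E.states n).lk w = some L) :
    ∃ m, n ≤ m ∧ completesExitAt E m w L := by
  obtain ⟨m, hnm, hsm, hmin⟩ := first_sched E (n := n) (T := w) (by rw [hpc]; simp)
  have hpers := pers_interval E hnm hmin
  have hpcm := hpers.1.trans hpc
  have hlkm := hpers.2.1.trans hl
  have hstep := E.steps m
  rw [hsm] at hstep
  rcases hstep.from_exitCAS hpcm with hr | ⟨hr1, hr2, -⟩
  · exact ⟨m, hnm, hsm, hlkm, by rw [hpcm]; simp, hr⟩
  · obtain ⟨m2, hm2, hc⟩ := door_live E (n := m+1) hr1 (by rw [hr2]; exact hlkm)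
    exact ⟨m2, by omega, hc⟩

lemma crit_live {n : ℕ} {w : Thread} {L : Lock}
    (hpc : (E.states n).pc w = PC.crit) (hl : (E.states n).lk w = some L) :
    ∃ m, n ≤ m ∧ completesExitAt E m w L := by
  classical
  obtain ⟨m0, hm0, hpm0⟩ := E.critFinite n w hpc
  have hP : ∃ k, n ≤ k ∧ (E.states k).pc w ≠ PC.crit := ⟨m0, hm0, hpm0⟩
  obtain ⟨hk1, hk2⟩ := Nat.find_spec hP
  have hcrit : ∀ j, n ≤ j → j < Nat.find hP → (E.states j).pc w = PC.crit := by
    intro j h1 h2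
    by_contra hcc
    exact absurd ⟨h1, hcc⟩ (Nat.find_min hP h2)
  obtain ⟨k, hkeq⟩ : ∃ k, k = Nat.find hP := ⟨_, rfl⟩
  rw [← hkeq] at hk1 hk2 hcrit
  have hlk : ∀ j, n ≤ j → j ≤ k → (E.states j).lk w = some L := by
    intro j h1 h2
    induction j, h1 using Nat.le_induction with
    | base => exact hl
    | succ j hj ih =>
      have hjk : j < k := by omega
      have hpers := (E.steps j).lk_pers (w := w) (Or.inl (hcrit j hj hjk))
      rw [hpers]
      exact ih (by omega)
  have hkn : n < k := lt_of_le_of_ne hk1 (fun e => hk2 (by rw [← e]; exact hpc))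
  have hk1' : k - 1 + 1 = k := by omega
  have hsch : E.sched (k-1) = w := by
    by_contra hns
    have hpp := ((E.steps (k-1)).pers hns).1
    apply hk2
    rw [← hk1', hpp]
    exact hcrit (k-1) (by omega) (by omega)
  have hstep := E.steps (k-1)
  rw [hsch] at hstep
  have hpck1 : (E.states (k-1)).pc w = PC.crit := hcrit (k-1) (by omega) (by omega)
  rcases hstep.from_crit hpck1 with hr | ⟨hr1, hr2, -⟩
  · exfalso
    apply hk2
    rw [← hk1']
    exact hr
  · have hpck : (E.states k).pc w = PC.exitCAS := by rw [← hk1']; exact hr1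
    have hlkk : (E.states k).lk w = some L := hlk k hk1 le_rfl
    obtain ⟨m2, hm2, hc⟩ := cas_live E hpck hlkk
    exact ⟨m2, by omega, hc⟩

lemma head_live {n : ℕ} {h : Thread} {L : Lock}
    (h0 : (Q E n L)[0]? = some h) :
    ∃ m, n ≤ m ∧ completesExitAt E m h L := by
  have I := QI E n
  have hlk : (E.states n).lk h = some L := I.lkOf (QInv.mem_of_get h0)
  rcases I.hd L h h0 with hc | hc | hc | hc
  · exact crit_live E hc hlk
  · exact cas_live E hc hlk
  · exact door_live E hc.1 hlk
  · have hgz : (E.states n).Grant h ≠ none := by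
      intro hz
      exact ((I.mem L h).1 (QInv.mem_of_get h0)).2 ⟨hc.1, hz⟩
    cases hg : (E.states n).Grant h with
    | none => exact absurd hg hgz
    | some M =>
      have hM : M = L := Option.some_inj.1 ((I.grantLk hg).symm.trans hlk)
      subst hM
      exact grant_live E hg

lemma queue_live : ∀ (i n : ℕ) (T : Thread) (L : Lock), (Q E n L)[i]? = some T →
    ∃ m, n ≤ m ∧ completesExitAt E m T L := by
  intro i
  induction i using Nat.strong_induction_on with
  | _ i ih =>
    intro n T L hT
    cases i with
    | zero => exact head_live E hT
    | succ i =>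
      obtain ⟨h, h0⟩ : ∃ h, (Q E n L)[0]? = some h := by
        have hlen : i + 1 < (Q E n L).length := (List.getElem?_eq_some_iff.1 hT).1
        cases hh : (Q E n L)[0]? with
        | none => rw [List.getElem?_eq_none_iff] at hh; omega
        | some h => exact ⟨h, rfl⟩
      obtain ⟨m1, hm1, hcomp⟩ := head_live E h0
      have hout : h ∉ Q E (m1+1) L := by
        intro hmem
        have hlkh := (QI E (m1+1)).lkOf hmem
        have hrem := hcomp.2.2.2
        have hnone := ((QI E (m1+1)).lkrem h).1 hrem
        rw [hnone] at hlkh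
        cases hlkh
      have claim : ∀ d, (∃ m, n ≤ m ∧ m ≤ n + d ∧ ∃ j, j ≤ i ∧ (Q E m L)[j]? = some T) ∨
          ((Q E (n+d) L)[i+1]? = some T ∧ (Q E (n+d) L)[0]? = some h) := by
        intro d
        induction d with
        | zero => exact Or.inr ⟨hT, h0⟩
        | succ d ihd =>
          rcases ihd with hfound | ⟨hq1, hq2⟩
          · obtain ⟨m, a, b, c⟩ := hfound
            exact Or.inl ⟨m, a, by omega, c⟩
          · rcases QE E (n+d) L with he | ⟨x, he⟩ | he
            · refine Or.inr ⟨?_, ?_⟩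
              · rw [Nat.add_succ, he]; exact hq1
              · rw [Nat.add_succ, he]; exact hq2
            · refine Or.inr ⟨?_, ?_⟩
              · rw [Nat.add_succ, he,
                  List.getElem?_append_left (List.getElem?_eq_some_iff.1 hq1).1]
                exact hq1
              · rw [Nat.add_succ, he,
                  List.getElem?_append_left (List.getElem?_eq_some_iff.1 hq2).1]
                exact hq2
            · refine Or.inl ⟨n+d+1, by omega, by omega, i, le_rfl, ?_⟩
              rw [he, List.getElem?_tail]
              exact hq1
      rcases claim (m1 + 1 - n) with ⟨m, hm1', hm2', j, hj, hTj⟩ | ⟨hq1, hq2⟩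
      · obtain ⟨m2, hm2, hc⟩ := ih j (by omega) m T L hTj
        exact ⟨m2, by omega, hc⟩
      · exfalso
        have hnn : n + (m1 + 1 - n) = m1 + 1 := by omega
        rw [hnn] at hq2
        exact hout (QInv.mem_of_get hq2)

end Live

/-- Lockout freedom: every thread that starts executing the entry code for a lock `L`
eventually completes the exit code for `L`. -/
theorem lockout_free {Thread Lock : Type} [DecidableEq Thread] [DecidableEq Lock]
    [Fintype Thread] (E : Execution Thread Lock) (L : Lock) (t : Thread) (n : ℕ)
    (h : doorstepAt E n t L) :
    ∃ m, n < m ∧ completesExitAt E m t L := by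
  obtain ⟨hsn, hpcn, hpcn1, hlk1⟩ := h
  have hstep := E.steps n
  rw [hsn] at hstep
  rcases hstep.from_remainder hpcn with hr | hr | hr
  · exact absurd hr hpcn1
  · have hmem : t ∈ Q E (n+1) L := ((QI E (n+1)).mem L t).2 ⟨hlk1, by rw [hr]; simp⟩
    obtain ⟨i, hi⟩ := List.mem_iff_getElem?.1 hmem
    obtain ⟨m, hm, hc⟩ := queue_live E i (n+1) t L hi
    exact ⟨m, by omega, hc⟩
  · have hmem : t ∈ Q E (n+1) L := ((QI E (n+1)).mem L t).2 ⟨hlk1, by rw [hr]; simp⟩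
    obtain ⟨i, hi⟩ := List.mem_iff_getElem?.1 hmem
    obtain ⟨m, hm, hc⟩ := queue_live E i (n+1) t L hi
    exact ⟨m, by omega, hc⟩

end Hemlock
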